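/- For every odd integer n ≥ 5, every edge-friendly labeling f of the crown graph K_n × K_2 satisfies |v_f(0) − v_f(1)| ≤ 2n−8. -/

import Mathlib

open SimpleGraph

/-- The lexicographic product (composition) `G[H]`. -/
def lexProd {α β : Type*} (G : SimpleGraph α) (H : SimpleGraph β) :
    SimpleGraph (α × β) where
  Adj x y := G.Adj x.1 y.1 ∨ (x.1 = y.1 ∧ H.Adj x.2 y.2)
  symm := ⟨fun x y (h : G.Adj x.1 y.1 ∨ (x.1 = y.1 ∧ H.Adj x.2 y.2)) =>
    h.elim (fun h' => Or.inl h'.symm) (fun ⟨he, h2⟩ => Or.inr ⟨he.symm, h2.symm⟩)⟩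
  loopless := ⟨fun x (h : G.Adj x.1 x.1 ∨ (x.1 = x.1 ∧ H.Adj x.2 x.2)) =>
    h.elim (G.loopless.irrefl x.1) (fun ⟨_, h2⟩ => H.loopless.irrefl x.2 h2)⟩

/-- The direct (tensor, Kronecker) product `G × H`. -/
def tensorProd {α β : Type*} (G : SimpleGraph α) (H : SimpleGraph β) :
    SimpleGraph (α × β) where
  Adj x y := G.Adj x.1 y.1 ∧ H.Adj x.2 y.2
  symm := ⟨fun _ _ (⟨h1, h2⟩ : _ ∧ _) => ⟨h1.symm, h2.symm⟩⟩
  loopless := ⟨fun x (h : G.Adj x.1 x.1 ∧ H.Adj x.2 x.2) => G.loopless.irrefl x.1 h.1⟩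

/-- The number of edges labeled `i` by the edge labeling `f`. -/
noncomputable def edgeCount {V : Type*} (G : SimpleGraph V) (f : G.edgeSet → ZMod 2) (i : ZMod 2) : ℕ :=
  Nat.card {e : G.edgeSet // f e = i}

/-- The number of edges incident to `v` that are labeled `i` (the `i`-degree of `v`). -/
noncomputable def labDeg {V : Type*} (G : SimpleGraph V) (f : G.edgeSet → ZMod 2) (i : ZMod 2) (v : V) : ℕ :=
  Nat.card {e : G.edgeSet // f e = i ∧ v ∈ (e : Sym2 V)}

/-- The number of vertices whose induced (partial) label is `i`: those incident to strictly
more `i`-edges than `(1-i)`-edges. -/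
noncomputable def vertexCount {V : Type*} (G : SimpleGraph V) (f : G.edgeSet → ZMod 2) (i : ZMod 2) : ℕ :=
  Nat.card {v : V // labDeg G f (1 - i) v < labDeg G f i v}

/-- An edge labeling (a surjective function onto `ZMod 2`) is edge-friendly if
`|e_f(0) - e_f(1)| ≤ 1`. -/
def EdgeFriendly {V : Type*} (G : SimpleGraph V) (f : G.edgeSet → ZMod 2) : Prop :=
  Function.Surjective f ∧ |(edgeCount G f 0 : ℤ) - (edgeCount G f 1 : ℤ)| ≤ 1

/-- A graph is strongly edge-balanced if some edge-friendly labeling `f` satisfies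
`v_f(0) = v_f(1)` and `e_f(0) = e_f(1)`. -/
def StronglyEdgeBalanced {V : Type*} (G : SimpleGraph V) : Prop :=
  ∃ f : G.edgeSet → ZMod 2, EdgeFriendly G f ∧
    vertexCount G f 0 = vertexCount G f 1 ∧ edgeCount G f 0 = edgeCount G f 1

/-- `|v_f(0) - v_f(1)|` for an edge labeling `f`. -/
noncomputable def ebIndex {V : Type*} (G : SimpleGraph V) (f : G.edgeSet → ZMod 2) : ℕ :=
  ((vertexCount G f 0 : ℤ) - (vertexCount G f 1 : ℤ)).natAbs

/-- The edge-balanced index set of `G`. -/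
def EBI {V : Type*} (G : SimpleGraph V) : Set ℕ :=
  {k | ∃ f : G.edgeSet → ZMod 2, EdgeFriendly G f ∧ ebIndex G f = k}

/-- The crown graph `K_n × K_2`: the direct product of the complete graph on `n` vertices
with `K_2`; `(u,a)` is adjacent to `(v,b)` iff `u ≠ v` and `a ≠ b`. -/
def crown (n : ℕ) : SimpleGraph (Fin n × Fin 2) :=
  tensorProd (⊤ : SimpleGraph (Fin n)) (⊤ : SimpleGraph (Fin 2))

/-!
The crown graph is bipartite with both sides of size `n`, and it is `(n - 1)`-regular with
`n - 1` even. On one side, the balances `d₀(v) - d₁(v)` of the labelled degrees are therefore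
even, and they sum to `e_f(0) - e_f(1)` because each edge has exactly one end there; being even
and at most `1` in absolute value, the sum vanishes. A vertex labelled `0` contributes at least
`2` and one labelled `1` at least `-(n - 1)`, so with `A` and `B` such vertices on the side,
`2A ≤ (n - 1)B` and `A + B ≤ n`, which forces `A - B ≤ n - 4` once `n ≥ 5` (and symmetrically
`B - A ≤ n - 4`). Adding the two sides gives the bound `2n - 8`.
-/

open Finset

section Arithmetic

variable {ι : Type*} (s : Finset ι) (x : ι → ℤ)

theorem two_mul_card_pos_le_mul_card_neg (m : ℤ) (heven : ∀ i ∈ s, Even (x i))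
    (hlb : ∀ i ∈ s, -m ≤ x i) (hsum : ∑ i ∈ s, x i = 0) :
    2 * (#{i ∈ s | 0 < x i} : ℤ) ≤ m * #{i ∈ s | x i < 0} := by
  have hpoint : ∀ i ∈ s,
      2 * (if 0 < x i then 1 else 0) - m * (if x i < 0 then 1 else 0) ≤ x i := by
    intro i hi
    obtain ⟨k, hk⟩ := heven i hi
    have := hlb i hi
    split_ifs <;> omega
  have := Finset.sum_le_sum hpoint
  rwa [Finset.sum_sub_distrib, ← Finset.mul_sum, ← Finset.mul_sum, Finset.sum_boole,
    Finset.sum_boole, hsum, sub_nonpos] at this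

theorem card_pos_add_card_neg_le : #{i ∈ s | 0 < x i} + #{i ∈ s | x i < 0} ≤ #s := by
  calc #{i ∈ s | 0 < x i} + #{i ∈ s | x i < 0}
      ≤ #{i ∈ s | 0 < x i} + #{i ∈ s | ¬0 < x i} := by
        gcongr with i
        exact fun h => h.asymm
    _ = #s := Finset.card_filter_add_card_filter_not _

theorem card_pos_sub_card_neg_le (hs : 5 ≤ #s) (heven : ∀ i ∈ s, Even (x i))
    (hlb : ∀ i ∈ s, -(#s : ℤ) < x i) (hsum : ∑ i ∈ s, x i = 0) :
    (#{i ∈ s | 0 < x i} : ℤ) - #{i ∈ s | x i < 0} ≤ #s - 4 := by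
  have hmul := two_mul_card_pos_le_mul_card_neg s x (#s - 1) heven
    (fun i hi => by linarith [hlb i hi]) hsum
  have hcard := card_pos_add_card_neg_le s x
  set a := #{i ∈ s | 0 < x i}
  set b := #{i ∈ s | x i < 0}
  obtain hb | hb | hb : b = 0 ∨ b = 1 ∨ 2 ≤ b := by omega
  · rw [hb] at hmul ⊢; push_cast at hmul; omega
  · rw [hb] at hmul ⊢; push_cast at hmul; omega
  · omega

theorem abs_card_pos_sub_card_neg_le (hs : 5 ≤ #s) (heven : ∀ i ∈ s, Even (x i))
    (hbound : ∀ i ∈ s, |x i| < #s) (hsum : ∑ i ∈ s, x i = 0) :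
    |(#{i ∈ s | 0 < x i} : ℤ) - #{i ∈ s | x i < 0}| ≤ #s - 4 := by
  have hneg := card_pos_sub_card_neg_le s (-x) hs (fun i hi => (heven i hi).neg)
    (fun i hi => by linarith [le_abs_self (x i), hbound i hi, Pi.neg_apply x i])
    (by simp only [Pi.neg_apply, Finset.sum_neg_distrib, hsum, neg_zero])
  simp only [Pi.neg_apply, neg_pos, Left.neg_neg_iff] at hneg
  rw [abs_le]
  constructor
  · linarith
  · exact card_pos_sub_card_neg_le s x hs heven
      (fun i hi => by linarith [neg_abs_le (x i), hbound i hi]) hsum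

end Arithmetic

section Labels

variable {V : Type*} {G : SimpleGraph V} (f : G.edgeSet → ZMod 2)

variable (G) in
noncomputable def labBalance (v : V) : ℤ := labDeg G f 0 v - labDeg G f 1 v

variable [Fintype V]

theorem vertexCount_zero_eq_card : vertexCount G f 0 = #{v | 0 < labBalance G f v} := by
  rw [vertexCount, Nat.card_eq_fintype_card, Fintype.card_subtype, sub_zero]
  simp only [labBalance, sub_pos, Nat.cast_lt]

theorem vertexCount_one_eq_card : vertexCount G f 1 = #{v | labBalance G f v < 0} := by
  rw [vertexCount, Nat.card_eq_fintype_card, Fintype.card_subtype, sub_self]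
  simp only [labBalance, sub_neg, Nat.cast_lt]

variable [DecidableRel G.Adj]

theorem edgeCount_eq_card (i : ZMod 2) : edgeCount G f i = #{e : G.edgeSet | f e = i} := by
  rw [edgeCount, Nat.card_eq_fintype_card, Fintype.card_subtype]

variable [DecidableEq V]

theorem labDeg_eq_card (i : ZMod 2) (v : V) :
    labDeg G f i v = #{e : G.edgeSet | f e = i ∧ v ∈ (e : Sym2 V)} := by
  rw [labDeg, Nat.card_eq_fintype_card, Fintype.card_subtype]

theorem card_edgeSet_mem_eq_degree (v : V) :
    #{e : G.edgeSet | v ∈ (e : Sym2 V)} = G.degree v := by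
  rw [← Fintype.card_subtype, ← G.card_incidenceSet_eq_degree]
  exact Fintype.card_congr ((Equiv.subtypeSubtypeEquivSubtypeInter (· ∈ G.edgeSet) (v ∈ ·)).trans
    (Equiv.setCongr rfl))

theorem labDeg_zero_add_labDeg_one (v : V) :
    labDeg G f 0 v + labDeg G f 1 v = G.degree v := by
  have hone : ∀ e, f e = 1 ↔ ¬f e = 0 := fun e => by
    generalize f e = a; revert a; decide
  simp only [labDeg_eq_card, hone, ← card_edgeSet_mem_eq_degree, ← Finset.filter_filter]
  rw [Finset.filter_comm, Finset.filter_comm (fun e => ¬f e = 0)]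
  exact Finset.card_filter_add_card_filter_not _

theorem even_labBalance {v : V} (h : Even (G.degree v)) : Even (labBalance G f v) := by
  obtain ⟨k, hk⟩ := h
  have := labDeg_zero_add_labDeg_one f v
  exact ⟨k - labDeg G f 1 v, by rw [labBalance]; omega⟩

theorem abs_labBalance_le (v : V) : |labBalance G f v| ≤ G.degree v := by
  have := labDeg_zero_add_labDeg_one f v
  rw [labBalance, abs_le]
  constructor <;> omega

end Labels

namespace SimpleGraph.IsBipartiteWith

variable {V : Type*} [DecidableEq V] {G : SimpleGraph V} {s : Finset V} {t : Set V}

theorem card_filter_mem_edge_eq_one (h : G.IsBipartiteWith s t) (e : G.edgeSet) :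
    #{v ∈ s | v ∈ (e : Sym2 V)} = 1 := by
  obtain ⟨e, he⟩ := e
  induction e using Sym2.ind with
  | _ x y =>
    have hdisj := Set.disjoint_left.1 h.disjoint
    rw [Finset.card_eq_one]
    rcases h.mem_of_adj he with ⟨hx, hy⟩ | ⟨hx, hy⟩
    · exact ⟨x, by ext v; simp only [Finset.mem_filter, Sym2.mem_iff, Finset.mem_singleton]; grind⟩
    · exact ⟨y, by ext v; simp only [Finset.mem_filter, Sym2.mem_iff, Finset.mem_singleton]; grind⟩

variable [Fintype V] [DecidableRel G.Adj] (f : G.edgeSet → ZMod 2)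

theorem sum_labDeg (h : G.IsBipartiteWith s t) (i : ZMod 2) :
    ∑ v ∈ s, labDeg G f i v = edgeCount G f i := by
  simp only [labDeg_eq_card, edgeCount_eq_card, ← Finset.filter_filter]
  have := Finset.sum_card_bipartiteAbove_eq_sum_card_bipartiteBelow
    (fun (v : V) (e : G.edgeSet) => v ∈ (e : Sym2 V)) (s := s) (t := {e | f e = i})
  simpa only [Finset.bipartiteAbove, Finset.bipartiteBelow, h.card_filter_mem_edge_eq_one,
    Finset.sum_const, smul_eq_mul, mul_one] using this

-- The balances sum to `e_f(0) - e_f(1)`, which is even since every balance is, hence zero.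
theorem sum_labBalance_eq_zero (h : G.IsBipartiteWith s t)
    (hf : |(edgeCount G f 0 : ℤ) - edgeCount G f 1| ≤ 1) (heven : ∀ v ∈ s, Even (G.degree v)) :
    ∑ v ∈ s, labBalance G f v = 0 := by
  have hsum : ∑ v ∈ s, labBalance G f v = edgeCount G f 0 - edgeCount G f 1 := by
    simp only [labBalance, Finset.sum_sub_distrib, ← Nat.cast_sum, h.sum_labDeg]
  obtain ⟨k, hk⟩ : Even (∑ v ∈ s, labBalance G f v) :=
    Finset.even_sum _ fun v hv => even_labBalance f (heven v hv)
  rw [abs_le, ← hsum] at hf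
  omega

theorem abs_card_pos_sub_card_neg_labBalance_le (h : G.IsBipartiteWith s t)
    (hf : |(edgeCount G f 0 : ℤ) - edgeCount G f 1| ≤ 1) (hs : 5 ≤ #s)
    (heven : ∀ v ∈ s, Even (G.degree v)) (hdeg : ∀ v ∈ s, G.degree v < #s) :
    |(#{v ∈ s | 0 < labBalance G f v} : ℤ) - #{v ∈ s | labBalance G f v < 0}| ≤ #s - 4 :=
  abs_card_pos_sub_card_neg_le s _ hs (fun v hv => even_labBalance f (heven v hv))
    (fun v hv => (abs_labBalance_le f v).trans_lt (by exact_mod_cast hdeg v hv))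
    (h.sum_labBalance_eq_zero f hf heven)

end SimpleGraph.IsBipartiteWith

section Crown

variable {n : ℕ}

theorem crown_adj {x y : Fin n × Fin 2} : (crown n).Adj x y ↔ x.1 ≠ y.1 ∧ x.2 ≠ y.2 := Iff.rfl

instance : DecidableRel (crown n).Adj := fun _ _ => decidable_of_iff _ crown_adj.symm

def crownSide (n : ℕ) (a : Fin 2) : Finset (Fin n × Fin 2) := {v | v.2 = a}

theorem crown_degree (v : Fin n × Fin 2) : (crown n).degree v = n - 1 := by
  have : (crown n).neighborFinset v = ({v.1}ᶜ : Finset (Fin n)) ×ˢ ({v.2}ᶜ : Finset (Fin 2)) := by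
    ext w
    simp [crown_adj, ne_comm]
  rw [SimpleGraph.degree, this, Finset.card_product, Finset.card_compl, Finset.card_compl]
  simp

theorem card_crownSide (a : Fin 2) : #(crownSide n a) = n := by
  have : crownSide n a = Finset.univ ×ˢ {a} := by
    ext v
    simp only [crownSide, Finset.mem_filter, Finset.mem_univ, true_and, Finset.mem_product,
      Finset.mem_singleton]
  rw [this, Finset.card_product]
  simp

theorem crown_isBipartiteWith (a : Fin 2) :
    (crown n).IsBipartiteWith ↑(crownSide n a) {v | v.2 ≠ a} where
  disjoint := Set.disjoint_left.2 fun v hv hv' => hv' (by simpa [crownSide] using hv)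
  mem_of_adj v w hvw := by
    have := (crown_adj.1 hvw).2
    simp only [crownSide, Finset.coe_filter, Finset.mem_univ, true_and, Set.mem_ofPred_eq]
    omega

theorem card_filter_eq_sum_card_filter_crownSide (p : Fin n × Fin 2 → Prop) [DecidablePred p] :
    #{v | p v} = ∑ a, #{v ∈ crownSide n a | p v} := by
  rw [Finset.card_eq_sum_card_fiberwise fun v _ => Finset.mem_coe.2 (Finset.mem_univ v.2)]
  simp only [crownSide, Finset.filter_comm]

theorem abs_card_pos_sub_card_neg_crownSide_le (hodd : Odd n) (hn : 5 ≤ n)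
    {f : (crown n).edgeSet → ZMod 2}
    (hf : |(edgeCount (crown n) f 0 : ℤ) - edgeCount (crown n) f 1| ≤ 1) (a : Fin 2) :
    |(#{v ∈ crownSide n a | 0 < labBalance (crown n) f v} : ℤ)
      - #{v ∈ crownSide n a | labBalance (crown n) f v < 0}| ≤ n - 4 := by
  have heven : Even (n - 1) := Nat.Odd.sub_odd hodd odd_one
  simpa only [card_crownSide] using
    (crown_isBipartiteWith a).abs_card_pos_sub_card_neg_labBalance_le f hf
      (by rw [card_crownSide]; omega) (fun v _ => by rwa [crown_degree])
      (fun v _ => by rw [crown_degree, card_crownSide]; omega)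

end Crown

theorem crown_odd_upper_bound (n : ℕ) (hodd : Odd n) (hn : 5 ≤ n) :
    ∀ f : (crown n).edgeSet → ZMod 2, EdgeFriendly (crown n) f →
      ebIndex (crown n) f ≤ 2 * n - 8 := by
  intro f hf
  have h0 := abs_le.1 (abs_card_pos_sub_card_neg_crownSide_le hodd hn hf.2 0)
  have h1 := abs_le.1 (abs_card_pos_sub_card_neg_crownSide_le hodd hn hf.2 1)
  have : (ebIndex (crown n) f : ℤ) ≤ 2 * n - 8 := by
    rw [ebIndex, Int.natCast_natAbs, vertexCount_zero_eq_card, vertexCount_one_eq_card,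
      card_filter_eq_sum_card_filter_crownSide, card_filter_eq_sum_card_filter_crownSide]
    push_cast
    rw [Fin.sum_univ_two, Fin.sum_univ_two, abs_le]
    constructor <;> linarith
  omega
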